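/- Let X ⊂ ℝ^{d̂₀×τ} be a finite set. For every function h: X → {1,…,K+1} there exist a finite depth l, a transformer Ĥ ∈ H_Trans^{(l,m)} with block budget m = (d̂₀, 2, 1, 1, 4) (two heads, head dimension 1, value dimension 1, feed-forward width 4, hidden dimension d̂₀), and a classifier readout f such that the maximum-value classifier exactly realizes h, i.e., argmax_{k∈{1,…,K+1}} (f ∘ Ĥ(x))_k = h(x) for every x ∈ X. -/

import Mathlib

open MeasureTheory Matrix

/-- Matrices in `ℝ^{a×b}`. -/
abbrev Mat (a b : ℕ) : Type := Matrix (Fin a) (Fin b) ℝ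

/-- Column-wise softmax. -/
noncomputable def colSoftmax {n t : ℕ} (M : Matrix (Fin n) (Fin t) ℝ) :
    Matrix (Fin n) (Fin t) ℝ :=
  Matrix.of fun i j => Real.exp (M i j) / ∑ k, Real.exp (M k j)

/-- Budget `m = (d̂, h, m_h, m_V, r)` of a transformer block. -/
structure Budget where
  dh : ℕ
  heads : ℕ
  mh : ℕ
  mV : ℕ
  r : ℕ

/-- Componentwise scalar multiplication of a budget. -/
def Budget.smul (c : ℕ) (m : Budget) : Budget :=
  ⟨c * m.dh, c * m.heads, c * m.mh, c * m.mV, c * m.r⟩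

/-- Multi-head softmax self-attention layer. -/
noncomputable def attLayer {dh t heads mh mV : ℕ}
    (WO : Fin heads → Matrix (Fin dh) (Fin mV) ℝ)
    (WV : Fin heads → Matrix (Fin mV) (Fin dh) ℝ)
    (WK WQ : Fin heads → Matrix (Fin mh) (Fin dh) ℝ)
    (H : Mat dh t) : Mat dh t :=
  H + ∑ i, WO i * WV i * H * colSoftmax ((WK i * H)ᵀ * (WQ i * H))

/-- Feed-forward layer with ReLU activation. -/
noncomputable def ffLayer {dh t r : ℕ}
    (W1 : Matrix (Fin r) (Fin dh) ℝ) (W2 : Matrix (Fin dh) (Fin r) ℝ)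
    (b1 : Fin r → ℝ) (b2 : Fin dh → ℝ) (H : Mat dh t) : Mat dh t :=
  H + W2 * Matrix.of (fun i j => max 0 ((W1 * H) i j + b1 i)) +
    Matrix.of fun i _ => b2 i

/-- `f` is a transformer block `FF ∘ Att` with budget `m`. -/
def IsBlock (m : Budget) (t : ℕ) (f : Mat m.dh t → Mat m.dh t) : Prop :=
  ∃ (WO : Fin m.heads → Matrix (Fin m.dh) (Fin m.mV) ℝ)
    (WV : Fin m.heads → Matrix (Fin m.mV) (Fin m.dh) ℝ)
    (WK WQ : Fin m.heads → Matrix (Fin m.mh) (Fin m.dh) ℝ)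
    (W1 : Matrix (Fin m.r) (Fin m.dh) ℝ) (W2 : Matrix (Fin m.dh) (Fin m.r) ℝ)
    (b1 : Fin m.r → ℝ) (b2 : Fin m.dh → ℝ),
    f = fun H => ffLayer W1 W2 b1 b2 (attLayer WO WV WK WQ H)

/-- One-layer affine (fully connected) map. -/
def IsAffineMap' {A B : Type*} [AddCommGroup A] [Module ℝ A] [AddCommGroup B] [Module ℝ B]
    (f : A → B) : Prop :=
  ∃ (L : A →ₗ[ℝ] B) (b : B), f = fun x => L x + b

/-- Composition of `l` functions (last one applied last). -/
def iterComp {α : Type*} : (l : ℕ) → (Fin l → α → α) → α → α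
  | 0, _ => id
  | l + 1, g => g (Fin.last l) ∘ iterComp l fun i => g i.castSucc

/-- Transformer hypothesis space `H_Trans^{(l,m)}`: composites of `l` blocks of budget `m`
after a one-layer affine embedding. -/
def HTrans (d0 t : ℕ) (l : ℕ) (m : Budget) : Set (Mat d0 t → Mat m.dh t) :=
  { Hhat | ∃ (blocks : Fin l → (Mat m.dh t → Mat m.dh t)) (F : Mat d0 t → Mat m.dh t),
      (∀ i, IsBlock m t (blocks i)) ∧ IsAffineMap' F ∧ Hhat = iterComp l blocks ∘ F }

/-- The budget `(K+1)·(2τ(2τd̂₀+1), 1, 1, τ(2τd̂₀+1), 2τ(2τd̂₀+1))`. -/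
def bigBudget (d0 t K : ℕ) : Budget :=
  Budget.smul (K + 1)
    ⟨2 * t * (2 * t * d0 + 1), 1, 1, t * (2 * t * d0 + 1), 2 * t * (2 * t * d0 + 1)⟩

/-- The classifier readout `f^k(H) = W_{4,k}(W_{3,k}H + b_{3,k})ᵀ + b_{4,k}`. -/
noncomputable def readout {dh t : ℕ} (W3 : Fin dh → ℝ) (W4 b3 : Fin t → ℝ) (b4 : ℝ)
    (H : Mat dh t) : ℝ :=
  (∑ j, W4 j * ((∑ i, W3 i * H i j) + b3 j)) + b4

/-- `f : ℝ^{d̂×τ} → ℝ^{K+1}` is a classifier readout. -/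
def IsReadout {dh t K : ℕ} (f : Mat dh t → (Fin (K + 1) → ℝ)) : Prop :=
  ∃ (W3 : Fin (K + 1) → Fin dh → ℝ) (W4 b3 : Fin (K + 1) → Fin t → ℝ)
    (b4 : Fin (K + 1) → ℝ),
    f = fun H k => readout (W3 k) (W4 k) (b3 k) (b4 k) H

/-!
A linear functional that is injective on the finite set `X`, rescaled and shifted, embeds every
input as a constant matrix whose entries are pairwise at distance `≥ 1` and lie above all target
values. A block with zero attention and four ReLU units adds a multiple of the tent function
`max 0 (1 - |w - a|)` to one row, which moves the value `a` to any prescribed `b` and fixes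
everything at distance `≥ 1` from `a`; stacking one such block per input writes the label of
each input into the entry `(0, 0)`. The readout `k ↦ k·H₀₀ - k²/2 = H₀₀²/2 - (k - H₀₀)²/2`
is then strictly maximal at the label.
-/

open Function

theorem Module.exists_dual_injOn_of_finite {K V : Type*} [Field K] [Infinite K]
    [AddCommGroup V] [Module K V] {s : Set V} (hs : s.Finite) :
    ∃ φ : Module.Dual K V, Set.InjOn φ s := by
  by_contra! hφ
  have : Finite s := hs.to_subtype
  let ι := {p : s × s // (p.1 : V) ≠ p.2}
  obtain ⟨⟨⟨x, y⟩, hxy⟩, htop⟩ := Subspace.exists_eq_top_of_iUnion_eq_univ (ι := ι)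
    (p := fun p => LinearMap.ker (Module.Dual.eval K V (p.1.1 - p.1.2))) <| by
      refine Set.eq_univ_of_forall fun φ => ?_
      have := hφ φ
      simp only [Set.InjOn, not_forall, exists_prop] at this
      obtain ⟨x, hx, y, hy, hφxy, hxy⟩ := this
      exact Set.mem_iUnion.mpr ⟨⟨(⟨x, hx⟩, ⟨y, hy⟩), hxy⟩, by simp [hφxy]⟩
  refine hxy (sub_eq_zero.mp ((Module.forall_dual_apply_eq_zero_iff K _).mp fun φ => ?_))
  simpa using LinearMap.congr_fun (LinearMap.ker_eq_top.mp htop) φ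

theorem Finset.exists_affine_sep_of_injOn {α : Type*} {s : Finset α} {f : α → ℝ}
    (hf : Set.InjOn f s) (δ M : ℝ) :
    ∃ a c : ℝ, (∀ x ∈ s, ∀ y ∈ s, x ≠ y → δ ≤ |(a * f x + c) - (a * f y + c)|) ∧
      ∀ x ∈ s, M ≤ a * f x + c := by
  classical
  obtain ⟨a, ha⟩ := ((s ×ˢ s).image fun p => δ / |f p.1 - f p.2|).exists_le
  obtain ⟨c, hc⟩ := (s.image fun x => M - a * f x).exists_le
  refine ⟨a, c, fun x hx y hy hxy => ?_, fun x hx => ?_⟩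
  · have hpos : 0 < |f x - f y| := abs_pos.mpr (sub_ne_zero.mpr fun h => hxy (hf hx hy h))
    have hle := ha _ (mem_image_of_mem _ (mem_product.mpr ⟨hx, hy⟩ : (x, y) ∈ s ×ˢ s))
    calc δ = δ / |f x - f y| * |f x - f y| := by field_simp
      _ ≤ a * |f x - f y| := by gcongr
      _ ≤ |a| * |f x - f y| := by gcongr; exact le_abs_self a
      _ = |(a * f x + c) - (a * f y + c)| := by rw [← abs_mul]; ring_nf
  · linarith [hc _ (mem_image_of_mem _ hx)]

theorem iterComp_succ {α : Type*} (l : ℕ) (g : Fin (l + 1) → α → α) :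
    iterComp (l + 1) g = g (Fin.last l) ∘ iterComp l fun i => g i.castSucc :=
  rfl

theorem Function.IsFixedPt.iterComp {α : Type*} {l : ℕ} {g : Fin l → α → α} {x : α}
    (hg : ∀ i, IsFixedPt (g i) x) : IsFixedPt (iterComp l g) x := by
  induction l with
  | zero => exact isFixedPt_id x
  | succ l ih => exact (hg _).comp (ih fun i => hg _)

theorem Function.Semiconj.iterComp {α β : Type*} {π : α → β} {l : ℕ}
    {f : Fin l → α → α} {g : Fin l → β → β} (h : ∀ i, Semiconj π (f i) (g i)) :
    Semiconj π (iterComp l f) (iterComp l g) := by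
  induction l with
  | zero => exact Semiconj.id_right
  | succ l ih => exact (h _).comp_right (ih fun i => h _)

/-- The tent function `max 0 (1 - |s|)`, written with three ReLUs. -/
noncomputable def tent (s : ℝ) : ℝ :=
  max 0 (s + 1) - 2 * max 0 s + max 0 (s - 1)

theorem tent_zero : tent 0 = 1 := by
  norm_num [tent]

theorem tent_eq_zero {s : ℝ} (hs : 1 ≤ |s|) : tent s = 0 := by
  rcases le_abs'.mp hs with hs | hs
  · rw [tent, max_eq_left (by linarith), max_eq_left (by linarith), max_eq_left (by linarith)]
    ring
  · rw [tent, max_eq_right (by linarith), max_eq_right (by linarith), max_eq_right (by linarith)]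
    ring

noncomputable def bump (a b w : ℝ) : ℝ :=
  w + (b - a) * tent (w - a)

theorem bump_self (a b : ℝ) : bump a b a = b := by
  simp [bump, tent_zero]

theorem isFixedPt_bump {a b w : ℝ} (hw : 1 ≤ |w - a|) : IsFixedPt (bump a b) w := by
  simp [IsFixedPt, bump, tent_eq_zero hw]

/-- Applying the bumps in the order `0, 1, …`: the bumps before `j` fix `u j`, and those after
`j` fix `v j`. -/
theorem iterComp_bump_apply {n : ℕ} (u v : Fin n → ℝ) (hu : ∀ i j, i ≠ j → 1 ≤ |u i - u j|)
    (hv : ∀ i j, j < i → 1 ≤ |v j - u i|) (j : Fin n) :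
    iterComp n (fun i => bump (u i) (v i)) (u j) = v j := by
  induction n with
  | zero => exact j.elim0
  | succ n ih =>
    rw [iterComp_succ]
    induction j using Fin.lastCases with
    | last =>
      have hfix : IsFixedPt (iterComp n fun i => bump (u i.castSucc) (v i.castSucc))
          (u (Fin.last n)) :=
        .iterComp fun i => isFixedPt_bump (hu _ _ (Fin.castSucc_lt_last i).ne')
      simp only [Function.comp_apply, hfix.eq, bump_self]
    | cast j =>
      rw [Function.comp_apply, ih _ _ (fun i k hik => hu _ _ (Fin.castSucc_injective n |>.ne hik))
        (fun i k hki => hv _ _ (Fin.castSucc_lt_castSucc_iff.mpr hki))]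
      exact isFixedPt_bump (hv _ _ (Fin.castSucc_lt_last j))

theorem isBlock_ffLayer (m : Budget) (t : ℕ) (W1 : Matrix (Fin m.r) (Fin m.dh) ℝ)
    (W2 : Matrix (Fin m.dh) (Fin m.r) ℝ) (b1 : Fin m.r → ℝ) (b2 : Fin m.dh → ℝ) :
    IsBlock m t (ffLayer W1 W2 b1 b2) :=
  ⟨0, 0, 0, 0, W1, W2, b1, b2, by funext H; simp [attLayer]⟩

theorem isAffineMap'_const {V : Type*} [AddCommGroup V] [Module ℝ V] {m n : ℕ}
    (ψ : V →ₗ[ℝ] ℝ) (c : ℝ) :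
    IsAffineMap' fun x : V => (Matrix.of fun _ _ => ψ x + c : Mat m n) :=
  ⟨ψ.smulRight (Matrix.of fun _ _ => 1), Matrix.of fun _ _ => c, by funext x; ext; simp⟩

section Construction

variable {d t : ℕ} (i₀ : Fin d) (j₀ : Fin t)

-- The fourth hidden unit is idle: three ReLUs already give `tent`.
noncomputable def bumpLayer (a b : ℝ) : Mat d t → Mat d t :=
  ffLayer (Matrix.of fun (_ : Fin 4) q => if q = i₀ then 1 else 0)
    (Matrix.of fun i p => if i = i₀ then ![b - a, -2 * (b - a), b - a, 0] p else 0)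
    ![1 - a, -a, -1 - a, 0] 0

theorem bumpLayer_apply_self (a b : ℝ) (H : Mat d t) (j : Fin t) :
    bumpLayer i₀ a b H i₀ j = bump a b (H i₀ j) := by
  simp only [bumpLayer, ffLayer, Matrix.add_apply, Matrix.mul_apply, of_apply, ite_mul, one_mul,
    zero_mul, Finset.sum_ite_eq', Finset.mem_univ, ↓reduceIte, Pi.zero_apply, Fin.sum_univ_four,
    cons_val_zero, cons_val_one, cons_val, add_zero, bump, tent]
  ring_nf

noncomputable def labelReadout {K : ℕ} (H : Mat d t) (k : Fin (K + 1)) : ℝ :=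
  readout (Pi.single i₀ 1) (Pi.single j₀ (k : ℝ)) 0 (-(k : ℝ) ^ 2 / 2) H

theorem isReadout_labelReadout (K : ℕ) : IsReadout (labelReadout (K := K) i₀ j₀) :=
  ⟨fun _ => Pi.single i₀ 1, fun k => Pi.single j₀ (k : ℝ), 0, fun k => -(k : ℝ) ^ 2 / 2, rfl⟩

theorem labelReadout_lt {K : ℕ} {H : Mat d t} {k l : Fin (K + 1)} (hH : H i₀ j₀ = l)
    (hkl : k ≠ l) : labelReadout i₀ j₀ H k < labelReadout i₀ j₀ H l := by
  have hsq : 0 < ((k : ℝ) - l) ^ 2 :=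
    sq_pos_of_ne_zero (sub_ne_zero.mpr (by exact_mod_cast Fin.val_ne_of_ne hkl))
  simp only [labelReadout, readout, Pi.single_apply, ite_mul, one_mul, zero_mul,
    Finset.sum_ite_eq', Finset.mem_univ, ↓reduceIte, Pi.zero_apply, add_zero, hH]
  nlinarith

end Construction

theorem exists_mem_HTrans_apply_eq {d t : ℕ} (i₀ : Fin d) (j₀ : Fin t) {X : Set (Mat d t)}
    (hX : X.Finite) (g : Mat d t → ℝ) :
    ∃ l, ∃ Hhat ∈ HTrans d t l ⟨d, 2, 1, 1, 4⟩, ∀ x ∈ X, Hhat x i₀ j₀ = g x := by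
  classical
  obtain ⟨φ, hφ⟩ := Module.exists_dual_injOn_of_finite (K := ℝ) hX
  set S := hX.toFinset
  obtain ⟨M, hM⟩ := (S.image g).exists_le
  obtain ⟨a, c, hsep, hlarge⟩ :=
    Finset.exists_affine_sep_of_injOn (s := S) (f := φ) (by simpa [S] using hφ) 1 (M + 1)
  let u x := a * φ x + c
  let pt : Fin S.card → Mat d t := fun i => S.equivFin.symm i
  have hpt : ∀ i, pt i ∈ S := fun i => (S.equivFin.symm i).2
  have hu : ∀ i j, i ≠ j → 1 ≤ |u (pt i) - u (pt j)| := fun i j hij =>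
    hsep _ (hpt i) _ (hpt j) (Subtype.val_injective.ne (S.equivFin.symm.injective.ne hij))
  have hv : ∀ i j, j < i → 1 ≤ |g (pt j) - u (pt i)| := fun i j _ => by
    have := hM _ (Finset.mem_image_of_mem g (hpt j))
    have := hlarge _ (hpt i)
    rw [abs_sub_comm]
    exact le_abs.mpr (.inl (by linarith))
  let blocks i := bumpLayer (t := t) i₀ (u (pt i)) (g (pt i))
  have hsemi : Semiconj (fun H : Mat d t => H i₀ j₀) (iterComp _ blocks)
      (iterComp _ fun i => bump (u (pt i)) (g (pt i))) :=
    .iterComp fun i H => bumpLayer_apply_self i₀ _ _ H j₀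
  refine ⟨S.card, iterComp _ blocks ∘ fun x => Matrix.of fun _ _ => (a • φ) x + c,
    ⟨blocks, _, fun i => isBlock_ffLayer _ _ _ _ _ _, isAffineMap'_const _ _, rfl⟩,
    fun x hx => ?_⟩
  obtain ⟨i, rfl⟩ : ∃ i, pt i = x := ⟨S.equivFin ⟨x, by simpa [S] using hx⟩, by simp [pt]⟩
  exact (hsemi _).trans (iterComp_bump_apply _ _ hu hv i)

/-- fixed-width, growing-depth exact realization: for finite
`X ⊂ ℝ^{d̂₀×τ}` (with `τ ≥ K+1`), every `h : X → {1,…,K+1}` is realized as the (strict)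
argmax of `f ∘ Ĥ` for some finite depth `l`, some `Ĥ ∈ H_Trans^{(l,m)}` with block budget
`m = (d̂₀, 2, 1, 1, 4)`, and some classifier readout `f`. -/
theorem statement13 (d0 t K : ℕ) (hd0 : 0 < d0) (ht : K + 1 ≤ t)
    (X : Set (Mat d0 t)) (hX : X.Finite)
    (h : Mat d0 t → Fin (K + 1)) :
    ∃ (l : ℕ), ∃ Hhat ∈ HTrans d0 t l ⟨d0, 2, 1, 1, 4⟩,
      ∃ f : Mat d0 t → (Fin (K + 1) → ℝ), IsReadout f ∧
        ∀ x ∈ X, ∀ k : Fin (K + 1), k ≠ h x → f (Hhat x) k < f (Hhat x) (h x) := by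
  let i₀ : Fin d0 := ⟨0, hd0⟩
  let j₀ : Fin t := ⟨0, by omega⟩
  obtain ⟨l, Hhat, hHhat, hlabel⟩ := exists_mem_HTrans_apply_eq i₀ j₀ hX fun x => (h x : ℝ)
  exact ⟨l, Hhat, hHhat, labelReadout i₀ j₀, isReadout_labelReadout i₀ j₀ K,
    fun x hx k hk => labelReadout_lt i₀ j₀ (hlabel x hx) hk⟩
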